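/- Let ∇̄H be a smooth discrete gradient for a smooth function H : ℝᵐ → ℝ, and fix ȳ ∈ ℝᵐ. Define matrices A = ∂∇̄H(ȳ₀, y)/∂y evaluated at y = ȳ₀ = ȳ, and B = ∂∇̄H(ȳ₀, y)/∂ȳ₀ evaluated at the same point. Then B = Aᵀ and A + B equals the Hessian matrix H_{yy}(ȳ); in particular Aᵀ + A = H_{yy}(ȳ) and Bᵀ + B = H_{yy}(ȳ). -/

import Mathlib

open Matrix

namespace Stmt3Aux

variable {m : ℕ}

lemma hasDerivAt_pi_coord {F : ℝ → (Fin m → ℝ)} {F' : Fin m → ℝ} {t : ℝ}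
    (hF : HasDerivAt F F' t) (i : Fin m) :
    HasDerivAt (fun s => F s i) (F' i) t :=
  (ContinuousLinearMap.proj (R := ℝ) (φ := fun _ : Fin m => ℝ) i).hasFDerivAt.comp_hasDerivAt t hF

lemma hasDerivAt_dotProduct {F G : ℝ → (Fin m → ℝ)} {F' G' : Fin m → ℝ} {t : ℝ}
    (hF : HasDerivAt F F' t) (hG : HasDerivAt G G' t) :
    HasDerivAt (fun s => F s ⬝ᵥ G s) (F' ⬝ᵥ G t + F t ⬝ᵥ G') t := by
  simp only [dotProduct, ← Finset.sum_add_distrib]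
  exact HasDerivAt.fun_sum fun i _ => (hasDerivAt_pi_coord hF i).mul (hasDerivAt_pi_coord hG i)

noncomputable def Dfull (Dg : (Fin m → ℝ) → (Fin m → ℝ) → (Fin m → ℝ)) :
    ((Fin m → ℝ) × (Fin m → ℝ)) → ((Fin m → ℝ) × (Fin m → ℝ)) →L[ℝ] (Fin m → ℝ) :=
  fderiv ℝ (fun p => Dg p.1 p.2)

variable {Dg : (Fin m → ℝ) → (Fin m → ℝ) → (Fin m → ℝ)}
variable {H : (Fin m → ℝ) → ℝ}

lemma hasFDerivAt_Dfull (hDg : ContDiff ℝ (⊤ : ℕ∞) (fun p : (Fin m → ℝ) × (Fin m → ℝ) => Dg p.1 p.2))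
    (p : (Fin m → ℝ) × (Fin m → ℝ)) :
    HasFDerivAt (fun p : (Fin m → ℝ) × (Fin m → ℝ) => Dg p.1 p.2) (Dfull Dg p) p :=
  (hDg.differentiable (by simp) p).hasFDerivAt

lemma hasDerivAt_fst (hDg : ContDiff ℝ (⊤ : ℕ∞) (fun p : (Fin m → ℝ) × (Fin m → ℝ) => Dg p.1 p.2))
    (a b v : Fin m → ℝ) (t : ℝ) :
    HasDerivAt (fun s : ℝ => Dg (a + s • v) b) (Dfull Dg (a + t • v, b) (v, 0)) t := by
  have hc : HasDerivAt (fun s : ℝ => ((a + s • v, b) : _ × _)) ((v, 0)) t := by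
    have h1 : HasDerivAt (fun s : ℝ => a + s • v) v t := by
      simpa using ((hasDerivAt_id t).smul_const v).const_add a
    exact h1.prodMk (hasDerivAt_const t b)
  exact (hasFDerivAt_Dfull hDg _).comp_hasDerivAt t hc

lemma hasDerivAt_snd (hDg : ContDiff ℝ (⊤ : ℕ∞) (fun p : (Fin m → ℝ) × (Fin m → ℝ) => Dg p.1 p.2))
    (a b v : Fin m → ℝ) (t : ℝ) :
    HasDerivAt (fun s : ℝ => Dg a (b + s • v)) (Dfull Dg (a, b + t • v) (0, v)) t := by
  have hc : HasDerivAt (fun s : ℝ => ((a, b + s • v) : _ × _)) ((0, v)) t := by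
    have h1 : HasDerivAt (fun s : ℝ => b + s • v) v t := by
      simpa using ((hasDerivAt_id t).smul_const v).const_add b
    exact (hasDerivAt_const t a).prodMk h1
  exact (hasFDerivAt_Dfull hDg _).comp_hasDerivAt t hc

lemma hasDerivAt_diag (hDg : ContDiff ℝ (⊤ : ℕ∞) (fun p : (Fin m → ℝ) × (Fin m → ℝ) => Dg p.1 p.2))
    (a v : Fin m → ℝ) (t : ℝ) :
    HasDerivAt (fun s : ℝ => Dg (a + s • v) (a + s • v)) (Dfull Dg (a + t • v, a + t • v) (v, v)) t := by
  have h1 : HasDerivAt (fun s : ℝ => a + s • v) v t := by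
    simpa using ((hasDerivAt_id t).smul_const v).const_add a
  have hc : HasDerivAt (fun s : ℝ => ((a + s • v, a + s • v) : _ × _)) ((v, v)) t := h1.prodMk h1
  exact (hasFDerivAt_Dfull hDg _).comp_hasDerivAt t hc

/-- A in terms of Dfull -/
lemma A_eq (hDg : ContDiff ℝ (⊤ : ℕ∞) (fun p : (Fin m → ℝ) × (Fin m → ℝ) => Dg p.1 p.2))
    (ybar x : Fin m → ℝ) :
    fderiv ℝ (fun y => Dg ybar y) ybar x = Dfull Dg (ybar, ybar) (0, x) := by
  have hdiff : DifferentiableAt ℝ (fun y => Dg ybar y) ybar := by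
    have := hDg.differentiable (by simp)
    fun_prop
  have hline : HasDerivAt (fun t : ℝ => ybar + t • x) x 0 := by
    simpa using ((hasDerivAt_id (0:ℝ)).smul_const x).const_add ybar
  have h1 : HasDerivAt (fun t : ℝ => Dg ybar (ybar + t • x))
      (fderiv ℝ (fun y => Dg ybar y) ybar x) 0 := by
    have hg' : HasFDerivAt (fun y => Dg ybar y) (fderiv ℝ (fun y => Dg ybar y) ybar)
        (ybar + (0:ℝ) • x) := by simpa using hdiff.hasFDerivAt
    exact hg'.comp_hasDerivAt 0 hline
  have h2 := hasDerivAt_snd hDg ybar ybar x 0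
  rw [zero_smul, add_zero] at h2
  exact h1.unique h2

/-- B in terms of Dfull -/
lemma B_eq (hDg : ContDiff ℝ (⊤ : ℕ∞) (fun p : (Fin m → ℝ) × (Fin m → ℝ) => Dg p.1 p.2))
    (ybar x : Fin m → ℝ) :
    fderiv ℝ (fun u => Dg u ybar) ybar x = Dfull Dg (ybar, ybar) (x, 0) := by
  have hdiff : DifferentiableAt ℝ (fun u => Dg u ybar) ybar := by
    have := hDg.differentiable (by simp)
    fun_prop
  have hline : HasDerivAt (fun t : ℝ => ybar + t • x) x 0 := by
    simpa using ((hasDerivAt_id (0:ℝ)).smul_const x).const_add ybar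
  have h1 : HasDerivAt (fun t : ℝ => Dg (ybar + t • x) ybar)
      (fderiv ℝ (fun u => Dg u ybar) ybar x) 0 := by
    have hg' : HasFDerivAt (fun u => Dg u ybar) (fderiv ℝ (fun u => Dg u ybar) ybar)
        (ybar + (0:ℝ) • x) := by simpa using hdiff.hasFDerivAt
    exact hg'.comp_hasDerivAt 0 hline
  have h2 := hasDerivAt_fst hDg ybar ybar x 0
  rw [zero_smul, add_zero] at h2
  exact h1.unique h2

/-- key lemma for claim 2 -/
lemma key2 (hDg : ContDiff ℝ (⊤ : ℕ∞) (fun p : (Fin m → ℝ) × (Fin m → ℝ) => Dg p.1 p.2))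
    (ybar v w : Fin m → ℝ) :
    fderiv ℝ (fun y => Dg y y ⬝ᵥ w) ybar v = Dfull Dg (ybar, ybar) (v, v) ⬝ᵥ w := by
  have hdiff : DifferentiableAt ℝ (fun y => Dg y y ⬝ᵥ w) ybar := by
    have hd : DifferentiableAt ℝ (fun y : Fin m → ℝ => Dg y y) ybar := by
      have := hDg.differentiable (by simp)
      fun_prop
    simp only [dotProduct]
    apply DifferentiableAt.fun_sum
    intro i _
    exact (((ContinuousLinearMap.proj (R := ℝ) (φ := fun _ : Fin m => ℝ)
      i).differentiable.differentiableAt).comp ybar hd).mul (differentiableAt_const _)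
  have hline : HasDerivAt (fun t : ℝ => ybar + t • v) v 0 := by
    simpa using ((hasDerivAt_id (0:ℝ)).smul_const v).const_add ybar
  have h1 : HasDerivAt (fun t : ℝ => Dg (ybar + t • v) (ybar + t • v) ⬝ᵥ w)
      (fderiv ℝ (fun y => Dg y y ⬝ᵥ w) ybar v) 0 := by
    have hg' : HasFDerivAt (fun y => Dg y y ⬝ᵥ w) (fderiv ℝ (fun y => Dg y y ⬝ᵥ w) ybar)
        (ybar + (0:ℝ) • v) := by simpa using hdiff.hasFDerivAt
    have := hg'.comp_hasDerivAt 0 hline; exact this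
  have h2 := hasDerivAt_dotProduct (hasDerivAt_diag hDg ybar v 0) (hasDerivAt_const 0 w)
  rw [zero_smul, add_zero] at h2
  have h3 := h1.unique h2
  simpa using h3

/-- key lemma for claim 1 : mixed partials of the discrete gradient identity -/
lemma key1 (hDg : ContDiff ℝ (⊤ : ℕ∞) (fun p : (Fin m → ℝ) × (Fin m → ℝ) => Dg p.1 p.2))
    (hH : ContDiff ℝ (⊤ : ℕ∞) H)
    (hDG : ∀ u v, Dg u v ⬝ᵥ (v - u) = H v - H u)
    (ybar v w : Fin m → ℝ) :
    Dfull Dg (ybar, ybar) (v, 0) ⬝ᵥ w = Dfull Dg (ybar, ybar) (0, w) ⬝ᵥ v := by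
  -- Step 1
  have step1 : ∀ s : ℝ, Dfull Dg (ybar, ybar + s • w) (v, 0) ⬝ᵥ (s • w)
      - Dg ybar (ybar + s • w) ⬝ᵥ v = -(fderiv ℝ H ybar v) := by
    intro s
    have hF := hasDerivAt_fst hDg ybar (ybar + s • w) v 0
    rw [zero_smul, add_zero] at hF
    have hG : HasDerivAt (fun t : ℝ => s • w - t • v) (-v) 0 := by
      simpa using ((hasDerivAt_id (0:ℝ)).smul_const v).const_sub (s • w)
    have hL := hasDerivAt_dotProduct hF hG
    have hR : HasDerivAt (fun t : ℝ => H (ybar + s • w) - H (ybar + t • v))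
        (-(fderiv ℝ H ybar v)) 0 := by
      have hline : HasDerivAt (fun t : ℝ => ybar + t • v) v 0 := by
        simpa using ((hasDerivAt_id (0:ℝ)).smul_const v).const_add ybar
      have hg' : HasFDerivAt H (fderiv ℝ H ybar) (ybar + (0:ℝ) • v) := by
        simpa using (hH.differentiable (by simp) ybar).hasFDerivAt
      simpa using (hg'.comp_hasDerivAt 0 hline).const_sub (H (ybar + s • w))
    have heq : (fun t : ℝ => Dg (ybar + t • v) (ybar + s • w) ⬝ᵥ (s • w - t • v))
        = (fun t : ℝ => H (ybar + s • w) - H (ybar + t • v)) := by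
      funext t
      have h := hDG (ybar + t • v) (ybar + s • w)
      have he : (ybar + s • w) - (ybar + t • v) = s • w - t • v := by abel
      rw [he] at h
      exact h
    rw [heq] at hL
    have := hL.unique hR
    simp only [zero_smul, sub_zero, add_zero, dotProduct_neg] at this
    linarith
  -- Step 2 : differentiate step1 in s at 0
  have hPhi : ContDiff ℝ (⊤ : ℕ∞) (fun s : ℝ => Dfull Dg (ybar, ybar + s • w) (v, 0)) := by
    have h1 : ContDiff ℝ (⊤ : ℕ∞) (Dfull Dg) := hDg.fderiv_right (by simp)
    have h2 : ContDiff ℝ (⊤ : ℕ∞) (fun s : ℝ => ((ybar, ybar + s • w) : _ × _)) := by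
      apply ContDiff.prodMk contDiff_const
      exact contDiff_const.add (contDiff_id.smul contDiff_const)
    exact ((ContinuousLinearMap.apply ℝ (Fin m → ℝ)
      (((v, 0)) : (Fin m → ℝ) × (Fin m → ℝ))).contDiff).comp (h1.comp h2)
  have hPhid : HasDerivAt (fun s : ℝ => Dfull Dg (ybar, ybar + s • w) (v, 0))
      (deriv (fun s : ℝ => Dfull Dg (ybar, ybar + s • w) (v, 0)) 0) 0 :=
    ((hPhi.differentiable (by simp)) 0).hasDerivAt
  have hsw : HasDerivAt (fun s : ℝ => s • w) w 0 := by
    simpa using (hasDerivAt_id (0:ℝ)).smul_const w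
  have h1 := hasDerivAt_dotProduct hPhid hsw
  have h2 := hasDerivAt_dotProduct (hasDerivAt_snd hDg ybar ybar w 0) (hasDerivAt_const 0 v)
  rw [zero_smul, add_zero] at h2
  have h3 := h1.fun_sub h2
  have heq2 : (fun s : ℝ => Dfull Dg (ybar, ybar + s • w) (v, 0) ⬝ᵥ (s • w)
      - Dg ybar (ybar + s • w) ⬝ᵥ v) = fun _ : ℝ => -(fderiv ℝ H ybar v) := funext step1
  rw [heq2] at h3
  have h4 := h3.unique (hasDerivAt_const (0:ℝ) (-(fderiv ℝ H ybar v)))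
  simp only [zero_smul, add_zero, smul_zero, dotProduct_zero, zero_dotProduct,
    zero_add] at h4
  linarith

end Stmt3Aux

open Stmt3Aux in
open Matrix in
/-- For a smooth discrete gradient ∇̄H of a smooth H, with A = ∂∇̄H(ȳ₀,y)/∂y and
B = ∂∇̄H(ȳ₀,y)/∂ȳ₀ both evaluated at y = ȳ₀ = ȳ, one has B = Aᵀ and
A + B = H_{yy}(ȳ); in particular Aᵀ + A = H_{yy}(ȳ) and Bᵀ + B = H_{yy}(ȳ). -/
theorem stmt3 (m : ℕ) (H : (Fin m → ℝ) → ℝ)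
    (Dg : (Fin m → ℝ) → (Fin m → ℝ) → (Fin m → ℝ))
    (hH : ContDiff ℝ (⊤ : ℕ∞) H)
    (hDg : ContDiff ℝ (⊤ : ℕ∞) (fun p : (Fin m → ℝ) × (Fin m → ℝ) => Dg p.1 p.2))
    (hDG : ∀ u v, Dg u v ⬝ᵥ (v - u) = H v - H u)
    (hdiag : ∀ y v, Dg y y ⬝ᵥ v = fderiv ℝ H y v)
    (ybar : Fin m → ℝ)
    (A B : (Fin m → ℝ) → (Fin m → ℝ))
    (hA : ∀ v, A v = fderiv ℝ (fun y => Dg ybar y) ybar v)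
    (hB : ∀ v, B v = fderiv ℝ (fun u => Dg u ybar) ybar v) :
    (∀ v w, B v ⬝ᵥ w = v ⬝ᵥ A w) ∧
    (∀ v w, (A v + B v) ⬝ᵥ w = fderiv ℝ (fun y => fderiv ℝ H y w) ybar v) ∧
    (∀ v w, A v ⬝ᵥ w + A w ⬝ᵥ v = fderiv ℝ (fun y => fderiv ℝ H y w) ybar v) ∧
    (∀ v w, B v ⬝ᵥ w + B w ⬝ᵥ v = fderiv ℝ (fun y => fderiv ℝ H y w) ybar v) := by
  have hA' : ∀ x, A x = Dfull Dg (ybar, ybar) (0, x) := fun x => (hA x).trans (A_eq hDg ybar x)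
  have hB' : ∀ x, B x = Dfull Dg (ybar, ybar) (x, 0) := fun x => (hB x).trans (B_eq hDg ybar x)
  have c1 : ∀ v w, B v ⬝ᵥ w = v ⬝ᵥ A w := by
    intro v w
    rw [hA', hB', dotProduct_comm v]
    exact key1 hDg hH hDG ybar v w
  have c2 : ∀ v w, (A v + B v) ⬝ᵥ w = fderiv ℝ (fun y => fderiv ℝ H y w) ybar v := by
    intro v w
    have hfun : (fun y => fderiv ℝ H y w) = fun y => Dg y y ⬝ᵥ w :=
      funext fun y => (hdiag y w).symm
    rw [hfun, key2 hDg ybar v w, hA', hB']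
    have hvv : ((v, v) : (Fin m → ℝ) × (Fin m → ℝ)) = (0, v) + (v, 0) := by simp
    rw [hvv, map_add, add_dotProduct]
  refine ⟨c1, c2, ?_, ?_⟩
  · intro v w
    have h1 : A w ⬝ᵥ v = B v ⬝ᵥ w := by rw [c1 v w, dotProduct_comm]
    rw [← c2 v w, add_dotProduct, h1]
  · intro v w
    have h1 : B w ⬝ᵥ v = A v ⬝ᵥ w := by rw [c1 w v, dotProduct_comm]
    rw [← c2 v w, add_dotProduct, h1]
    ring
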